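/- Let (R,m) be a commutative Noetherian local ring, J an ideal of R, and M a finitely generated R-module. If a and b are ideals of R with Rad(a) = Rad(b), then ff-depth(a,m,J,M) = ff-depth(b,m,J,M); that is, the least integer i such that F^i_{a,m,J}(M) is not Artinian equals the least integer i such that F^i_{b,m,J}(M) is not Artinian. -/

import Mathlib

/-!
Common definitions: local cohomology with respect to a pair of ideals `(I,J)`
(the right derived functors of the `(I,J)`-torsion functor `Γ_{I,J}`), formal local
cohomology `F^i_{a,I,J}(M) = lim←_n H^i_{I,J}(M/a^n M)` and Čech formal local cohomology
(the cohomology of the inverse limit of the complexes, obtained by applying `Γ_{I,J}`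
degreewise to the canonical functorial injective resolutions of the modules `M/a^n M`),
together with the auxiliary notions used in the statements (formal filter depth,
attached and coassociated primes, cosupport, secondary representations, Krull dimension
of a module, arithmetic rank, grade, projective dimension, cohomological dimension).
-/

open CategoryTheory

namespace FLC

variable {R : Type} [CommRing R]

/-- The `(I,J)`-torsion submodule `Γ_{I,J}(M) = { x | I^n x ⊆ J x for some n }`,
equivalently `{ x | I^n ≤ J + Ann(x) for some n }`. -/
def pairTorsion (I J : Ideal R) (M : Type) [AddCommGroup M] [Module R M] :
    Submodule R M where
  carrier := { x | ∃ n : ℕ, I ^ n ≤ J ⊔ (Submodule.span R {x}).annihilator }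
  zero_mem' := ⟨0, by
    simp [Submodule.span_zero_singleton, Submodule.annihilator_bot]⟩
  add_mem' := by
    rintro x y ⟨n, hn⟩ ⟨m, hm⟩
    refine ⟨n + m, ?_⟩
    have h1 : (Submodule.span R {x}).annihilator ⊓ (Submodule.span R {y}).annihilator ≤
        (Submodule.span R {x + y}).annihilator := by
      intro r hr
      rw [Submodule.mem_inf, Submodule.mem_annihilator_span_singleton,
        Submodule.mem_annihilator_span_singleton] at hr
      rw [Submodule.mem_annihilator_span_singleton, smul_add, hr.1, hr.2, add_zero]
    have hmul : (J ⊔ (Submodule.span R {x}).annihilator) *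
        (J ⊔ (Submodule.span R {y}).annihilator) ≤
        J ⊔ ((Submodule.span R {x}).annihilator ⊓ (Submodule.span R {y}).annihilator) := by
      rw [Submodule.mul_le]
      intro a ha b hb
      obtain ⟨j, hj, a', ha', rfl⟩ := Submodule.mem_sup.mp ha
      obtain ⟨j', hj', b', hb', rfl⟩ := Submodule.mem_sup.mp hb
      have heq : (j + a') * (j' + b') = (j * (j' + b') + a' * j') + a' * b' := by ring
      rw [heq]
      exact Submodule.add_mem_sup
        (Ideal.add_mem J (Ideal.mul_mem_right _ J hj) (Ideal.mul_mem_left _ _ hj'))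
        (Submodule.mem_inf.mpr ⟨Ideal.mul_mem_right _ _ ha', Ideal.mul_mem_left _ _ hb'⟩)
    calc I ^ (n + m) = I ^ n * I ^ m := pow_add I n m
      _ ≤ _ := Ideal.mul_mono hn hm
      _ ≤ _ := hmul
      _ ≤ _ := sup_le_sup_left h1 J
  smul_mem' := by
    rintro r x ⟨n, hn⟩
    refine ⟨n, hn.trans (sup_le_sup_left (Submodule.annihilator_mono ?_) J)⟩
    rw [Submodule.span_le]
    rintro z rfl
    exact Submodule.smul_mem _ r (Submodule.mem_span_singleton_self x)

theorem mapsTo_pairTorsion (I J : Ideal R) {M N : Type} [AddCommGroup M] [Module R M]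
    [AddCommGroup N] [Module R N] (f : M →ₗ[R] N) (x : M) (hx : x ∈ pairTorsion I J M) :
    f x ∈ pairTorsion I J N := by
  obtain ⟨n, hn⟩ := hx
  refine ⟨n, hn.trans (sup_le_sup_left ?_ J)⟩
  intro r hr
  rw [Submodule.mem_annihilator_span_singleton] at hr ⊢
  rw [← map_smul, hr, map_zero]

/-- `Γ_{I,J}` as an endofunctor of the category of `R`-modules. -/
def gammaFunctor (I J : Ideal R) : ModuleCat R ⥤ ModuleCat R where
  obj M := ModuleCat.of R (pairTorsion I J M)
  map {M N} f := ModuleCat.ofHom (f.hom.restrict (fun x hx => mapsTo_pairTorsion I J f.hom x hx))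
  map_id M := by ext x; rfl
  map_comp f g := by ext x; rfl

instance (I J : Ideal R) : (gammaFunctor I J).Additive where
  map_add := @fun X Y f g => by ext x; rfl

/-- Local cohomology `H^i_{I,J}` with respect to the pair of ideals `(I,J)`:
the `i`-th right derived functor of the torsion functor `Γ_{I,J}`.  For `J = 0` this
is ordinary local cohomology `H^i_I`. -/
noncomputable def pairLocalCohomology (I J : Ideal R) (i : ℕ) : ModuleCat R ⥤ ModuleCat R :=
  (gammaFunctor I J).rightDerived i

/-- The local cohomology module `H^i_{I,J}(M)`. -/
noncomputable abbrev pairLocalCohomologyModule (I J : Ideal R) (i : ℕ) (M : Type)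
    [AddCommGroup M] [Module R M] : ModuleCat R :=
  (pairLocalCohomology I J i).obj (ModuleCat.of R M)

/-- Ordinary local cohomology `H^i_I(M)`, i.e. local cohomology with respect to the
pair `(I, 0)`. -/
noncomputable abbrev localCohomologyModule (I : Ideal R) (i : ℕ) (M : Type)
    [AddCommGroup M] [Module R M] : ModuleCat R :=
  pairLocalCohomologyModule I ⊥ i M

/-- The inverse limit of a tower of modules indexed by `ℕ`. -/
def InvLim (X : ℕ → Type) [∀ n, AddCommGroup (X n)] [∀ n, Module R (X n)]
    (T : ∀ n, X (n + 1) →ₗ[R] X n) : Submodule R (∀ n, X n) where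
  carrier := { f | ∀ n, T n (f (n + 1)) = f n }
  zero_mem' := fun n => map_zero _
  add_mem' := by intro f g hf hg n; simp [map_add, hf n, hg n]
  smul_mem' := by intro r f hf n; simp [map_smul, hf n]

lemma mem_InvLim (X : ℕ → Type) [∀ n, AddCommGroup (X n)] [∀ n, Module R (X n)]
    (T : ∀ n, X (n + 1) →ₗ[R] X n) (f : ∀ n, X n) :
    f ∈ InvLim X T ↔ ∀ n, T n (f (n + 1)) = f n := Iff.rfl

/-- The natural projection `M/a^{n+1}M → M/a^nM`. -/
def quotProjₗ (a : Ideal R) (M : Type) [AddCommGroup M] [Module R M] (n : ℕ) :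
    (M ⧸ (a ^ (n + 1) • ⊤ : Submodule R M)) →ₗ[R] (M ⧸ (a ^ n • ⊤ : Submodule R M)) :=
  Submodule.mapQ _ _ LinearMap.id (by
    intro x hx
    exact Submodule.smul_mono_left (Ideal.pow_le_pow_right (Nat.le_succ n)) hx)

/-- The natural projection as a morphism in `ModuleCat R`. -/
def quotProj (a : Ideal R) (M : Type) [AddCommGroup M] [Module R M] (n : ℕ) :
    ModuleCat.of R (M ⧸ (a ^ (n + 1) • ⊤ : Submodule R M)) ⟶
      ModuleCat.of R (M ⧸ (a ^ n • ⊤ : Submodule R M)) :=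
  ModuleCat.ofHom (quotProjₗ a M n)

/-- The `i`-th formal local cohomology `F^i_{a,I,J}(M)` of `M` with respect to `a` and
the pair of ideals `(I,J)`: the inverse limit of the natural projective system
`{H^i_{I,J}(M/a^n M)}_n`. -/
noncomputable def formalLocalCohomology (a I J : Ideal R) (i : ℕ) (M : Type)
    [AddCommGroup M] [Module R M] :
    Submodule R (∀ n : ℕ, (pairLocalCohomology I J i).obj
      (ModuleCat.of R (M ⧸ (a ^ n • ⊤ : Submodule R M)))) :=
  InvLim _ (fun n => ((pairLocalCohomology I J i).map (quotProj a M n)).hom)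

/-! ### The Čech formal local cohomology -/

/-- The double character module `N ↦ (N⋆)⋆`; an injective `R`-module in which `N`
canonically embeds. -/
abbrev DD (N : Type) [AddCommGroup N] [Module R N] : Type :=
  CharacterModule (CharacterModule N)

variable (R) in
/-- The canonical evaluation embedding of a module into its double character module. -/
def eval (N : Type) [AddCommGroup N] [Module R N] : N →ₗ[R] DD (R := R) N where
  toFun x :=
    { toFun := fun c => c x
      map_zero' := rfl
      map_add' := fun c₁ c₂ => rfl }
  map_add' x y := by ext c; exact map_add c x y
  map_smul' r x := by ext c; rfl

/-- The tower of cosyzygies of the canonical functorial injective resolution of `N` built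
from double character modules: `K 0 = N` and `K (j+1) = (K j)⋆⋆ / K j`. -/
noncomputable def tower (N : Type) [AddCommGroup N] [Module R N] : ℕ → ModuleCat R
  | 0 => ModuleCat.of R N
  | (j + 1) => ModuleCat.of R
      ((DD (R := R) (tower N j)) ⧸ LinearMap.range (eval R (tower N j)))

/-- The terms of the canonical functorial injective resolution of `N`:
`C^j = (K j)⋆⋆` where `K` is the cosyzygy tower. -/
noncomputable abbrev resTerm (N : Type) [AddCommGroup N] [Module R N] (j : ℕ) : Type :=
  DD (R := R) (tower N j : ModuleCat R)

/-- The differential of the canonical injective resolution. -/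
noncomputable def resD (N : Type) [AddCommGroup N] [Module R N] (j : ℕ) :
    resTerm (R := R) N j →ₗ[R] resTerm (R := R) N (j + 1) :=
  (eval R (tower N (j+1))).comp (LinearMap.range (eval R (tower N j))).mkQ

/-- Functoriality of the double character module. -/
noncomputable def DDmap {A B : Type} [AddCommGroup A] [Module R A] [AddCommGroup B]
    [Module R B] (f : A →ₗ[R] B) : DD (R := R) A →ₗ[R] DD (R := R) B :=
  CharacterModule.dual (CharacterModule.dual f)

lemma DDmap_eval {A B : Type} [AddCommGroup A] [Module R A] [AddCommGroup B]
    [Module R B] (f : A →ₗ[R] B) (x : A) :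
    DDmap f (eval R A x) = eval R B (f x) := by
  ext c; rfl

/-- Functoriality of the cosyzygy tower. -/
noncomputable def towMap {N N' : Type} [AddCommGroup N] [Module R N] [AddCommGroup N']
    [Module R N'] (f : N →ₗ[R] N') :
    ∀ j, (tower N j : ModuleCat R) →ₗ[R] (tower N' j : ModuleCat R)
  | 0 => f
  | (j + 1) => Submodule.mapQ _ _ (DDmap (towMap f j)) (by
      rintro x ⟨y, rfl⟩
      exact ⟨towMap f j y, (DDmap_eval (towMap f j) y).symm⟩)

/-- Functoriality of the canonical injective resolution. -/
noncomputable def resMap {N N' : Type} [AddCommGroup N] [Module R N] [AddCommGroup N']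
    [Module R N'] (f : N →ₗ[R] N') (j : ℕ) :
    resTerm (R := R) N j →ₗ[R] resTerm (R := R) N' j :=
  DDmap (towMap f j)

lemma resMap_resD {N N' : Type} [AddCommGroup N] [Module R N] [AddCommGroup N']
    [Module R N'] (f : N →ₗ[R] N') (j : ℕ) (x : resTerm (R := R) N j) :
    resMap f (j + 1) (resD N j x) = resD N' j (resMap f j x) := by
  ext c; rfl

/-- The restriction of a linear map to the `(I,J)`-torsion submodules. -/
def gammaRestrict (I J : Ideal R) {A B : Type} [AddCommGroup A] [Module R A]
    [AddCommGroup B] [Module R B] (f : A →ₗ[R] B) :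
    pairTorsion I J A →ₗ[R] pairTorsion I J B :=
  f.restrict (fun x hx => mapsTo_pairTorsion I J f x hx)

/-- The `j`-th term of the inverse limit (over `n`) of the complexes
`Γ_{I,J}(canonical injective resolution of M/a^n M)`. -/
noncomputable def cechTerm (a I J : Ideal R) (M : Type) [AddCommGroup M] [Module R M]
    (j : ℕ) : Type :=
  InvLim (fun n => pairTorsion I J (resTerm (R := R) (M ⧸ (a ^ n • ⊤ : Submodule R M)) j))
    (fun n => gammaRestrict I J (resMap (quotProjₗ a M n) j))

noncomputable instance (a I J : Ideal R) (M : Type) [AddCommGroup M] [Module R M] (j : ℕ) :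
    AddCommGroup (cechTerm a I J M j) := by
  delta cechTerm; infer_instance
noncomputable instance (a I J : Ideal R) (M : Type) [AddCommGroup M] [Module R M] (j : ℕ) :
    Module R (cechTerm a I J M j) := by
  delta cechTerm; infer_instance

/-- The differential of the limit complex. -/
noncomputable def cechD (a I J : Ideal R) (M : Type) [AddCommGroup M] [Module R M]
    (j : ℕ) : cechTerm a I J M j →ₗ[R] cechTerm a I J M (j + 1) where
  toFun f := ⟨fun n => gammaRestrict I J (resD _ j) (f.1 n), by
    rw [mem_InvLim]
    intro n
    apply Subtype.ext
    show resMap (quotProjₗ a M n) (j + 1) ((resD _ j) (f.1 (n+1)).1) = (resD _ j) (f.1 n).1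
    rw [resMap_resD]
    congr 1
    exact congrArg Subtype.val ((mem_InvLim _ _ f.1).mp f.2 n)⟩
  map_add' f g := by
    apply Subtype.ext
    funext n
    exact map_add (gammaRestrict I J (resD _ j)) _ _
  map_smul' r f := by
    apply Subtype.ext
    funext n
    exact map_smul (gammaRestrict I J (resD _ j)) r _

/-- The boundaries in degree `i` of the limit complex. -/
noncomputable def cechPrev (a I J : Ideal R) (M : Type) [AddCommGroup M] [Module R M] :
    ∀ i : ℕ, Submodule R (cechTerm a I J M i)
  | 0 => ⊥
  | (i + 1) => LinearMap.range (cechD a I J M i)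

/-- The `i`-th Čech formal local cohomology `F̌^i_{a,I,J}(M)` of `M` with respect to `a`
and the pair of ideals `(I,J)`: the `i`-th cohomology of the inverse limit (over `n`) of
the complexes computing `H_{I,J}(M/a^n M)` (the `(I,J)`-torsion parts of the canonical
functorial injective resolutions of the modules `M/a^n M`). -/
noncomputable def cechFormalLocalCohomology (a I J : Ideal R) (i : ℕ) (M : Type)
    [AddCommGroup M] [Module R M] : Type :=
  LinearMap.ker (cechD a I J M i) ⧸
    Submodule.comap (LinearMap.ker (cechD a I J M i)).subtype (cechPrev a I J M i)

noncomputable instance (a I J : Ideal R) (i : ℕ) (M : Type) [AddCommGroup M] [Module R M] :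
    AddCommGroup (cechFormalLocalCohomology a I J i M) := by
  delta cechFormalLocalCohomology; infer_instance
noncomputable instance (a I J : Ideal R) (i : ℕ) (M : Type) [AddCommGroup M] [Module R M] :
    Module R (cechFormalLocalCohomology a I J i M) := by
  delta cechFormalLocalCohomology; infer_instance

/-! ### Auxiliary notions -/

/-- The formal filter depth `ff-depth(a,I,J,M)`: the least integer `i` such that
`F^i_{a,I,J}(M)` is not Artinian (`∞` if there is no such `i`). -/
noncomputable def ffDepth (a I J : Ideal R) (M : Type) [AddCommGroup M] [Module R M] : ℕ∞ :=
  sInf ((↑) '' { i : ℕ | ¬ IsArtinian R (formalLocalCohomology a I J i M) })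

/-- The greatest integer `i` such that `F̌^i_{a,I,J}(M)` is not Artinian
(`gǧ-depth`). -/
noncomputable def ggCechDepth (a I J : Ideal R) (M : Type) [AddCommGroup M] [Module R M] :
    ℕ∞ :=
  sSup ((↑) '' { i : ℕ | ¬ IsArtinian R (cechFormalLocalCohomology a I J i M) })

/-- The least integer `i` such that `F̌^i_{a,I,J}(M)` is not Artinian (`fǧ-depth`). -/
noncomputable def ffCechDepth (a I J : Ideal R) (M : Type) [AddCommGroup M] [Module R M] :
    ℕ∞ :=
  sInf ((↑) '' { i : ℕ | ¬ IsArtinian R (cechFormalLocalCohomology a I J i M) })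

/-- `f-depth(b, M)`: the least integer `i` such that `H^i_b(M)` is not Artinian. -/
noncomputable def fDepth (b : Ideal R) (M : Type) [AddCommGroup M] [Module R M] : ℕ∞ :=
  sInf ((↑) '' { i : ℕ | ¬ IsArtinian R (localCohomologyModule b i M) })

/-- The cohomological dimension `cd(I, M) = sup { i | H^i_I(M) ≠ 0 }`. -/
noncomputable def cohomologicalDim (I : Ideal R) (M : Type) [AddCommGroup M] [Module R M] :
    ℕ∞ :=
  sSup ((↑) '' { i : ℕ | Nontrivial (localCohomologyModule I i M) })

/-- The (Krull) dimension of a module, `dim M = dim R/Ann(M)`. -/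
noncomputable def moduleDim (R : Type) [CommRing R] (M : Type) [AddCommGroup M]
    [Module R M] : WithBot ℕ∞ :=
  ringKrullDim (R ⧸ Module.annihilator R M)

/-- `(0 :_R x)`, the annihilator of an element of a module. -/
def elemAnn {M : Type} [AddCommGroup M] [Module R M] (x : M) : Ideal R :=
  (Submodule.span R {x}).annihilator

/-- The attached primes of a module `N`: a prime `p` is attached to `N` if for every
finitely generated ideal `b ⊆ p` there exists `x ∈ N` with `b ⊆ (0 :_R x) ⊆ p`. -/
def attachedPrimes (N : Type) [AddCommGroup N] [Module R N] : Set (PrimeSpectrum R) :=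
  { p | ∀ b : Ideal R, b.FG → b ≤ p.asIdeal →
      ∃ x : N, b ≤ elemAnn x ∧ elemAnn x ≤ p.asIdeal }

/-- A module is cocyclic if it has a (necessarily unique) smallest non-zero submodule;
equivalently, if it embeds into the injective hull of the residue field of some maximal
ideal. -/
def IsCocyclic (L : Type) [AddCommGroup L] [Module R L] : Prop :=
  ∃ S : Submodule R L, S ≠ ⊥ ∧ ∀ T : Submodule R L, T ≠ ⊥ → S ≤ T

/-- The coassociated primes of a module `N`: the primes of the form `Ann_R(L)` for a
cocyclic homomorphic image `L` of `N`. -/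
def coassociatedPrimes (N : Type) [AddCommGroup N] [Module R N] : Set (PrimeSpectrum R) :=
  { p | ∃ K : Submodule R N, IsCocyclic (R := R) (N ⧸ K) ∧
      p.asIdeal = Module.annihilator R (N ⧸ K) }

/-- The cosupport of a module `N`:
`CoSupp(N) = { p ∈ Spec R | Hom_R(R_p, N) ≠ 0 }`. -/
def coSupport (N : Type) [AddCommGroup N] [Module R N] : Set (PrimeSpectrum R) :=
  { p | ∃ f : Localization.AtPrime p.asIdeal →ₗ[R] N, f ≠ 0 }

/-- A module `S` is secondary if it is non-zero and for every `r : R`, multiplication by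
`r` on `S` is either surjective or nilpotent. -/
def IsSecondary (S : Type) [AddCommGroup S] [Module R S] : Prop :=
  Nontrivial S ∧ ∀ r : R,
    Function.Surjective (fun x : S => r • x) ∨ ∃ n : ℕ, ∀ x : S, r ^ n • x = 0

/-- A module is representable if it is a (finite) sum of secondary submodules. -/
def IsRepresentable (N : Type) [AddCommGroup N] [Module R N] : Prop :=
  ∃ (k : ℕ) (S : Fin k → Submodule R N),
    (∀ j, IsSecondary (R := R) (S j)) ∧ (⨆ j, S j) = ⊤

/-- The arithmetic rank `ara(b/a)`: the least number `n` of elements `y₁, …, yₙ` of `R`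
such that `Rad(a + (y₁, …, yₙ)) = Rad(b)`. -/
noncomputable def araRel (a b : Ideal R) : ℕ∞ :=
  sInf ((↑) '' { n : ℕ | ∃ y : Fin n → R,
    (a ⊔ Ideal.span (Set.range y)).radical = b.radical })

/-- The grade of an ideal `J` on `R`: `grade(J, R) = inf { i | Ext^i_R(R/J, R) ≠ 0 }`. -/
noncomputable def gradeIdeal (J : Ideal R) : ℕ∞ :=
  sInf ((↑) '' { i : ℕ | Nontrivial
    (((Ext R (ModuleCat R) i).obj (Opposite.op (ModuleCat.of R (R ⧸ J)))).obj
      (ModuleCat.of R R)) })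

/-- The projective dimension of a module `N`:
`pd(N) = sup { i | Ext^i_R(N, L) ≠ 0 for some L }`. -/
noncomputable def projDim (N : Type) [AddCommGroup N] [Module R N] : ℕ∞ :=
  sSup ((↑) '' { i : ℕ | ∃ L : ModuleCat R, Nontrivial
    (((Ext R (ModuleCat R) i).obj (Opposite.op (ModuleCat.of R N))).obj L) })

end FLC

open FLC

variable {R : Type} [CommRing R] [IsNoetherianRing R] [IsLocalRing R]

/-!
If `Rad a = Rad b` (and `R` is Noetherian) then every `aⁿM` contains some `bᵏM` and vice
versa, so the projective systems `{H^i_{I,J}(M/aⁿM)}` and `{H^i_{I,J}(M/bⁿM)}` are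
cofinal in each other and have isomorphic inverse limits. This only uses that `H^i_{I,J}`
is a functor, so `F^i_{a,m,J}(M) ≅ F^i_{b,m,J}(M)` for every `i`, and the two sets of
degrees in which these modules fail to be Artinian coincide.
-/

namespace FLC

section AdicLimit

variable {R : Type} [CommRing R] {M : Type} [AddCommGroup M] [Module R M]

def quotMap {p q : Submodule R M} (h : p ≤ q) :
    ModuleCat.of R (M ⧸ p) ⟶ ModuleCat.of R (M ⧸ q) :=
  ModuleCat.ofHom (Submodule.factor h)

@[simp]
lemma quotMap_refl (p : Submodule R M) :
    quotMap (le_refl p) = 𝟙 (ModuleCat.of R (M ⧸ p)) := by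
  ext x
  rfl

@[simp]
lemma quotMap_comp_quotMap {p q r : Submodule R M} (h₁ : p ≤ q) (h₂ : q ≤ r) :
    quotMap h₁ ≫ quotMap h₂ = quotMap (h₁.trans h₂) := by
  ext x
  rfl

lemma pow_smul_top_le_pow_smul_top (a : Ideal R) {n k : ℕ} (h : n ≤ k) :
    (a ^ k • ⊤ : Submodule R M) ≤ a ^ n • ⊤ :=
  Submodule.smul_mono_left (Ideal.pow_le_pow_right h)

lemma quotProj_eq_quotMap (a : Ideal R) (n : ℕ) :
    quotProj a M n = quotMap (pow_smul_top_le_pow_smul_top a (Nat.le_succ n)) :=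
  rfl

variable (F : ModuleCat R ⥤ ModuleCat R)

lemma map_quotMap_map_quotMap {p q r : Submodule R M} (h₁ : p ≤ q) (h₂ : q ≤ r)
    (x : F.obj (ModuleCat.of R (M ⧸ p))) :
    F.map (quotMap h₂) (F.map (quotMap h₁) x) = F.map (quotMap (h₁.trans h₂)) x := by
  rw [← ModuleCat.comp_apply, ← F.map_comp, quotMap_comp_quotMap]

/-- `lim←_n F(M/aⁿM)`; for `F = H^i_{I,J}` this is `F^i_{a,I,J}(M)`. -/
abbrev adicLimit (M : Type) [AddCommGroup M] [Module R M] (a : Ideal R) :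
    Submodule R (∀ n : ℕ, F.obj (ModuleCat.of R (M ⧸ (a ^ n • ⊤ : Submodule R M)))) :=
  InvLim _ (fun n => (F.map (quotProj a M n)).hom)

variable {F} {a : Ideal R}

lemma map_quotMap_apply_succ (f : adicLimit F M a) (n : ℕ) :
    F.map (quotMap (pow_smul_top_le_pow_smul_top a n.le_succ)) (f.1 (n + 1)) = f.1 n :=
  f.2 n

lemma map_quotMap_apply_of_le (f : adicLimit F M a) {n k : ℕ} (hnk : n ≤ k) :
    F.map (quotMap (pow_smul_top_le_pow_smul_top a hnk)) (f.1 k) = f.1 n := by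
  induction k, hnk using Nat.le_induction with
  | base => simp
  | succ k hnk ih =>
    rw [← ih, ← map_quotMap_apply_succ f k, map_quotMap_map_quotMap]

lemma map_quotMap_apply_eq (f : adicLimit F M a) {p : Submodule R M} {k k' : ℕ}
    (hk : a ^ k • ⊤ ≤ p) (hk' : a ^ k' • ⊤ ≤ p) :
    F.map (quotMap hk) (f.1 k) = F.map (quotMap hk') (f.1 k') := by
  rw [← map_quotMap_apply_of_le f (le_max_left k k'),
    ← map_quotMap_apply_of_le f (le_max_right k k'),
    map_quotMap_map_quotMap, map_quotMap_map_quotMap]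

lemma map_quotMap_apply (f : adicLimit F M a) {n k : ℕ}
    (h : (a ^ k • ⊤ : Submodule R M) ≤ a ^ n • ⊤) :
    F.map (quotMap h) (f.1 k) = f.1 n := by
  rw [map_quotMap_apply_eq f h le_rfl, quotMap_refl, F.map_id, ModuleCat.id_apply]

variable {b : Ideal R}

/-- Well defined because of `map_quotMap_apply_eq`: the choice of `k` with `bᵏM ⊆ aⁿM`
does not matter. -/
noncomputable def adicLimitMap (hba : ∀ n, ∃ k, (b ^ k • ⊤ : Submodule R M) ≤ a ^ n • ⊤) :
    adicLimit F M b →ₗ[R] adicLimit F M a where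
  toFun f := ⟨fun n => F.map (quotMap (hba n).choose_spec) (f.1 (hba n).choose), fun n => by
    dsimp only
    rw [quotProj_eq_quotMap, map_quotMap_map_quotMap]
    exact map_quotMap_apply_eq f _ _⟩
  map_add' f g := by ext n; exact map_add _ _ _
  map_smul' r f := by ext n; exact map_smul _ _ _

lemma adicLimitMap_adicLimitMap
    (hab : ∀ n, ∃ k, (a ^ k • ⊤ : Submodule R M) ≤ b ^ n • ⊤)
    (hba : ∀ n, ∃ k, (b ^ k • ⊤ : Submodule R M) ≤ a ^ n • ⊤) (f : adicLimit F M b) :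
    adicLimitMap hab (adicLimitMap hba f) = f := by
  ext n
  exact (map_quotMap_map_quotMap F _ _ _).trans (map_quotMap_apply f _)

noncomputable def adicLimitEquiv
    (hab : ∀ n, ∃ k, (a ^ k • ⊤ : Submodule R M) ≤ b ^ n • ⊤)
    (hba : ∀ n, ∃ k, (b ^ k • ⊤ : Submodule R M) ≤ a ^ n • ⊤) :
    adicLimit F M b ≃ₗ[R] adicLimit F M a :=
  { adicLimitMap hba with
    invFun := adicLimitMap hab
    left_inv := adicLimitMap_adicLimitMap hab hba
    right_inv := adicLimitMap_adicLimitMap hba hab }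

lemma exists_pow_smul_top_le_of_le_radical [IsNoetherianRing R] (h : b ≤ a.radical) (n : ℕ) :
    ∃ k, (b ^ k • ⊤ : Submodule R M) ≤ a ^ n • ⊤ := by
  obtain ⟨k, hk⟩ :=
    Ideal.exists_pow_le_of_le_radical_of_fg_radical h (IsNoetherian.noetherian _)
  exact ⟨k * n, Submodule.smul_mono_left (pow_mul b k n ▸ Ideal.pow_right_mono hk n)⟩

end AdicLimit

end FLC

theorem statement1_general (a b J : Ideal R) (M : Type) [AddCommGroup M] [Module R M]
    (h : a.radical = b.radical) :
    ffDepth a (IsLocalRing.maximalIdeal R) J M = ffDepth b (IsLocalRing.maximalIdeal R) J M := by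
  have e : ∀ i, formalLocalCohomology b (IsLocalRing.maximalIdeal R) J i M ≃ₗ[R]
      formalLocalCohomology a (IsLocalRing.maximalIdeal R) J i M := fun i =>
    adicLimitEquiv (exists_pow_smul_top_le_of_le_radical (h ▸ Ideal.le_radical))
      (exists_pow_smul_top_le_of_le_radical (h.symm ▸ Ideal.le_radical))
  simp only [ffDepth, (e _).isArtinian_iff]

/-- If `Rad(a) = Rad(b)`, then
`ff-depth(a,m,J,M) = ff-depth(b,m,J,M)`. -/
theorem statement1 (a b J : Ideal R) (M : Type) [AddCommGroup M] [Module R M]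
    [Module.Finite R M] (h : a.radical = b.radical) :
    ffDepth a (IsLocalRing.maximalIdeal R) J M = ffDepth b (IsLocalRing.maximalIdeal R) J M :=
  statement1_general a b J M h
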